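/- Let D > 0, t > 0, R > 0, and let y, c be points of ℝ³ with d := ‖y − c‖ > 0. Then (4·π·D·t)^{−3/2} · ∫_{x ∈ ball(c, R)} exp( −‖x − y‖² / (4·D·t) ) dx = (1/2)·( erf((R+d)/(2·√(D·t))) + erf((R−d)/(2·√(D·t))) ) + (√(D·t)/(d·√π)) · ( exp(−(R+d)²/(4·D·t)) − exp(−(R−d)²/(4·D·t)) ), where the integral is with respect to Lebesgue measure on ℝ³ over the open ball of radius R centered at c. -/

import Mathlib

/-
Translate `c` to the origin and reflect, so that `y - c` becomes `(d, 0, 0)`. On the slice `x₀ = u`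
of the ball the Gaussian factors as `e^{-(u-d)²/s²} e^{-‖p‖²/s²}` with `s² = 4Dt`, and in polar
coordinates its integral over the disc `‖p‖ < √(R² - u²)` is `π s² (1 - e^{-(R²-u²)/s²})`. This
leaves `π s² ∫_{-R}^{R} (e^{-(u-d)²/s²} - e^{(2du - R² - d²)/s²}) du`: the first term is an `erf`
difference, the second the exponential of an affine function of `u`.
-/

open MeasureTheory Real Set

/-- The Gauss error function `erf x = (2/√π) ∫₀ˣ exp(−u²) du`. -/
noncomputable def erf (x : ℝ) : ℝ :=
  (2 / Real.sqrt π) * ∫ u in (0 : ℝ)..x, Real.exp (-u ^ 2)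

open Metric

theorem integral_exp_neg_sq (x : ℝ) :
    ∫ u in (0 : ℝ)..x, exp (-u ^ 2) = √π / 2 * erf x := by
  have : √π ≠ 0 := (sqrt_pos.2 pi_pos).ne'
  rw [erf]
  field_simp

theorem erf_neg (x : ℝ) : erf (-x) = -erf x := by
  have h := intervalIntegral.integral_comp_neg (a := 0) (b := x) fun u => exp (-u ^ 2)
  simp only [neg_sq, neg_zero] at h
  rw [erf, erf, intervalIntegral.integral_symm (-x) 0, ← h]
  ring

theorem integral_exp_neg_sub_sq_div_sq (m : ℝ) {s : ℝ} (hs : s ≠ 0) (l r : ℝ) :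
    ∫ u in l..r, exp (-(u - m) ^ 2 / s ^ 2) =
      √π * s / 2 * (erf ((r - m) / s) - erf ((l - m) / s)) := by
  have hcont : Continuous fun u : ℝ => exp (-u ^ 2) := by fun_prop
  calc ∫ u in l..r, exp (-(u - m) ^ 2 / s ^ 2)
      = ∫ u in l..r, exp (-(u / s - m / s) ^ 2) := by
        congr with u; field_simp
    _ = s * ∫ v in (l - m) / s..(r - m) / s, exp (-v ^ 2) := by
        rw [intervalIntegral.integral_comp_div_sub (fun v => exp (-v ^ 2)) hs, smul_eq_mul,
          sub_div, sub_div]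
    _ = s * ((∫ v in 0..(r - m) / s, exp (-v ^ 2)) - ∫ v in 0..(l - m) / s, exp (-v ^ 2)) := by
        rw [intervalIntegral.integral_interval_sub_left (hcont.intervalIntegrable _ _)
          (hcont.intervalIntegrable _ _)]
    _ = √π * s / 2 * (erf ((r - m) / s) - erf ((l - m) / s)) := by
        rw [integral_exp_neg_sq, integral_exp_neg_sq]; ring

theorem integral_exp_mul_add {k : ℝ} (hk : k ≠ 0) (b l r : ℝ) :
    ∫ u in l..r, exp (k * u + b) = (exp (k * r + b) - exp (k * l + b)) / k := by
  rw [intervalIntegral.integral_comp_mul_add exp hk, integral_exp, smul_eq_mul]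
  field_simp

theorem integral_mul_exp_neg_sq_div_sq {s : ℝ} (hs : s ≠ 0) (ρ : ℝ) :
    ∫ r in (0 : ℝ)..ρ, r * exp (-r ^ 2 / s ^ 2) = s ^ 2 / 2 * (1 - exp (-ρ ^ 2 / s ^ 2)) := by
  have hderiv (r : ℝ) :
      HasDerivAt (fun r => -(s ^ 2 / 2) * exp (-r ^ 2 / s ^ 2)) (r * exp (-r ^ 2 / s ^ 2)) r := by
    refine ((((hasDerivAt_pow 2 r).fun_neg.div_const (s ^ 2)).exp).const_mul _).congr_deriv ?_
    simp only [Nat.cast_ofNat, Nat.add_one_sub_one, pow_one]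
    field_simp
  rw [intervalIntegral.integral_eq_sub_of_hasDerivAt (fun r _ => hderiv r)
    ((by fun_prop : Continuous fun r : ℝ => r * exp (-r ^ 2 / s ^ 2)).intervalIntegrable _ _)]
  rw [zero_pow two_ne_zero, neg_zero, zero_div, exp_zero]
  ring

theorem setIntegral_ball_comp_norm_sub_of_norm_eq {E F : Type*} [NormedAddCommGroup E]
    [InnerProductSpace ℝ E] [FiniteDimensional ℝ E] [MeasurableSpace E] [BorelSpace E]
    [NormedAddCommGroup F] [NormedSpace ℝ F]
    (g : ℝ → F) {c y v : E} (hv : ‖v‖ = ‖y - c‖) (R : ℝ) :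
    ∫ x in ball c R, g ‖x - y‖ = ∫ x in ball 0 R, g ‖x - v‖ := by
  set L := Submodule.reflection (ℝ ∙ (v - (y - c)))ᗮ
  have hLv : L v = y - c := Submodule.reflection_sub hv
  let φ : E ≃ₜ E := L.toHomeomorph.trans (Homeomorph.addRight c)
  have hφ : MeasurePreserving φ :=
    (measurePreserving_add_right volume c).comp L.measurePreserving
  have hpre : φ ⁻¹' ball c R = ball 0 R := by
    ext x
    simp [φ, dist_eq_norm]
  rw [← hφ.setIntegral_preimage_emb φ.measurableEmbedding, hpre]
  refine setIntegral_congr_fun measurableSet_ball fun x _ => ?_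
  have : φ x - y = L (x - v) := by
    simp only [φ, Homeomorph.trans_apply, LinearIsometryEquiv.coe_toHomeomorph,
      Homeomorph.coe_addRight, map_sub, hLv]
    abel
  rw [this, L.norm_map]

namespace EuclideanSpace

noncomputable def consMeasurableEquiv (n : ℕ) :
    ℝ × EuclideanSpace ℝ (Fin n) ≃ᵐ EuclideanSpace ℝ (Fin (n + 1)) :=
  ((MeasurableEquiv.refl ℝ).prodCongr (MeasurableEquiv.toLp 2 (Fin n → ℝ)).symm).trans
    ((MeasurableEquiv.piFinSuccAbove (fun _ => ℝ) 0).symm.trans (MeasurableEquiv.toLp 2 _))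

variable {n : ℕ}

theorem measurePreserving_consMeasurableEquiv :
    MeasurePreserving (consMeasurableEquiv n) :=
  (PiLp.volume_preserving_toLp _).comp <|
    ((volume_preserving_piFinSuccAbove (fun _ => ℝ) 0).symm _).comp <|
      (MeasurePreserving.id volume).prod (PiLp.volume_preserving_ofLp _)

@[simp]
theorem consMeasurableEquiv_apply_zero (q : ℝ × EuclideanSpace ℝ (Fin n)) :
    consMeasurableEquiv n q 0 = q.1 := by
  simp [consMeasurableEquiv, MeasurableEquiv.prodCongr]

@[simp]
theorem consMeasurableEquiv_apply_succ (q : ℝ × EuclideanSpace ℝ (Fin n)) (i : Fin n) :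
    consMeasurableEquiv n q i.succ = q.2 i := by
  simp [consMeasurableEquiv, MeasurableEquiv.prodCongr]

theorem consMeasurableEquiv_sub (q q' : ℝ × EuclideanSpace ℝ (Fin n)) :
    consMeasurableEquiv n q - consMeasurableEquiv n q' = consMeasurableEquiv n (q - q') := by
  ext i
  cases i using Fin.cases <;> simp

theorem norm_consMeasurableEquiv_sq (q : ℝ × EuclideanSpace ℝ (Fin n)) :
    ‖consMeasurableEquiv n q‖ ^ 2 = q.1 ^ 2 + ‖q.2‖ ^ 2 := by
  simp [EuclideanSpace.norm_sq_eq, Fin.sum_univ_succ]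

end EuclideanSpace

open EuclideanSpace

theorem setIntegral_prod_eq_integral_setIntegral_preimage {α β E : Type*} [MeasurableSpace α]
    [MeasurableSpace β] {μ : Measure α} {ν : Measure β} [SFinite μ] [SFinite ν]
    [NormedAddCommGroup E] [NormedSpace ℝ E] {s : Set (α × β)} (hs : MeasurableSet s)
    {f : α × β → E} (hf : IntegrableOn f s (μ.prod ν)) :
    ∫ z in s, f z ∂μ.prod ν = ∫ x, ∫ y in Prod.mk x ⁻¹' s, f (x, y) ∂ν ∂μ := by
  rw [← integral_indicator hs, integral_prod _ (hf.integrable_indicator hs)]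
  congr with x
  rw [← integral_indicator (measurable_prodMk_left hs)]
  rfl

theorem setIntegral_ball_eq_integral_setIntegral_ball {n : ℕ} {E : Type*}
    [NormedAddCommGroup E] [NormedSpace ℝ E] {R : ℝ} (hR : 0 ≤ R)
    {f : EuclideanSpace ℝ (Fin (n + 1)) → E} (hf : IntegrableOn f (ball 0 R)) :
    ∫ x in ball 0 R, f x =
      ∫ u, ∫ p in ball 0 √(R ^ 2 - u ^ 2), f (consMeasurableEquiv n (u, p)) := by
  have hψ := measurePreserving_consMeasurableEquiv (n := n)
  have hemb := (consMeasurableEquiv n).measurableEmbedding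
  have hslice (u : ℝ) :
      Prod.mk u ⁻¹' (consMeasurableEquiv n ⁻¹' ball 0 R) = ball 0 √(R ^ 2 - u ^ 2) := by
    ext p
    simp only [mem_preimage, mem_ball_zero_iff, Real.lt_sqrt (norm_nonneg _),
      ← sq_lt_sq₀ (norm_nonneg _) hR, norm_consMeasurableEquiv_sq]
    constructor <;> intro h <;> linarith
  rw [← hψ.setIntegral_preimage_emb hemb, Measure.volume_eq_prod,
    setIntegral_prod_eq_integral_setIntegral_preimage (f := fun q => f (consMeasurableEquiv n q))
      (measurableSet_ball.preimage hemb.measurable) ((hψ.integrableOn_comp_preimage hemb).2 hf)]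
  simp_rw [hslice]

theorem setIntegral_ball_fun_norm_fin_two {F : Type*} [NormedAddCommGroup F] [NormedSpace ℝ F]
    (f : ℝ → F) {ρ : ℝ} (hρ : 0 ≤ ρ) :
    ∫ p in ball (0 : EuclideanSpace ℝ (Fin 2)) ρ, f ‖p‖ =
      (2 * π) • ∫ r in 0..ρ, r • f r := by
  have hind : (ball (0 : EuclideanSpace ℝ (Fin 2)) ρ).indicator (fun p => f ‖p‖) =
      fun p => (Iio ρ).indicator f ‖p‖ := by
    ext p
    simp [indicator]
  have hunit : volume.real (ball (0 : EuclideanSpace ℝ (Fin 2)) 1) = π := by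
    simp [measureReal_def, pi_nonneg]
  rw [← integral_indicator measurableSet_ball, hind, integral_fun_norm_addHaar, hunit,
    finrank_euclideanSpace_fin, intervalIntegral.integral_of_le hρ, integral_Ioc_eq_integral_Ioo,
    ← Ioi_inter_Iio, ← setIntegral_indicator measurableSet_Iio]
  simp only [indicator_apply, Nat.add_one_sub_one, pow_one, smul_ite, smul_zero, mul_smul,
    ofNat_smul_eq_nsmul]

theorem setIntegral_ball_exp_neg_norm_sq_fin_two {s : ℝ} (hs : s ≠ 0) {ρ : ℝ}
    (hρ : 0 ≤ ρ) :
    ∫ p in ball (0 : EuclideanSpace ℝ (Fin 2)) ρ, exp (-‖p‖ ^ 2 / s ^ 2) =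
      π * s ^ 2 * (1 - exp (-ρ ^ 2 / s ^ 2)) := by
  rw [setIntegral_ball_fun_norm_fin_two (fun r => exp (-r ^ 2 / s ^ 2)) hρ]
  simp_rw [smul_eq_mul]
  rw [integral_mul_exp_neg_sq_div_sq hs]
  ring

theorem setIntegral_ball_exp_neg_norm_sub_sq_eq_intervalIntegral {s R : ℝ} (hs : s ≠ 0)
    (hR : 0 ≤ R) (d : ℝ) :
    ∫ x in ball (0 : EuclideanSpace ℝ (Fin 3)) R,
        exp (-‖x - consMeasurableEquiv 2 (d, 0)‖ ^ 2 / s ^ 2) =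
      ∫ u in -R..R,
        exp (-(u - d) ^ 2 / s ^ 2) * (π * s ^ 2 * (1 - exp (-(R ^ 2 - u ^ 2) / s ^ 2))) := by
  have hint : IntegrableOn (fun x => exp (-‖x - consMeasurableEquiv 2 (d, 0)‖ ^ 2 / s ^ 2))
      (ball (0 : EuclideanSpace ℝ (Fin 3)) R) :=
    ((by fun_prop : Continuous fun x : EuclideanSpace ℝ (Fin 3) =>
        exp (-‖x - consMeasurableEquiv 2 (d, 0)‖ ^ 2 / s ^ 2)).continuousOn.integrableOn_compact
      (isCompact_closedBall 0 R)).mono_set ball_subset_closedBall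
  have hslice (u : ℝ) :
      ∫ p in ball 0 √(R ^ 2 - u ^ 2),
          exp (-‖consMeasurableEquiv 2 (u, p) - consMeasurableEquiv 2 (d, 0)‖ ^ 2 / s ^ 2) =
        exp (-(u - d) ^ 2 / s ^ 2) *
          (π * s ^ 2 * (1 - exp (-√(R ^ 2 - u ^ 2) ^ 2 / s ^ 2))) := by
    simp_rw [consMeasurableEquiv_sub, norm_consMeasurableEquiv_sq, Prod.mk_sub_mk, sub_zero,
      neg_add, add_div, exp_add]
    rw [integral_const_mul, setIntegral_ball_exp_neg_norm_sq_fin_two hs (sqrt_nonneg _)]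
  -- For `|u| ≥ R` the junk value `√(R ^ 2 - u ^ 2) = 0` makes the slice term vanish.
  have hvanish : Function.support (fun u => exp (-(u - d) ^ 2 / s ^ 2) *
      (π * s ^ 2 * (1 - exp (-√(R ^ 2 - u ^ 2) ^ 2 / s ^ 2)))) ⊆ Ioc (-R) R := by
    intro u hu
    by_contra hout
    have : R ^ 2 - u ^ 2 ≤ 0 := by
      rw [mem_Ioc, not_and_or, not_lt, not_le] at hout
      rcases hout with h | h <;> nlinarith
    simp [sqrt_eq_zero'.2 this] at hu
  rw [setIntegral_ball_eq_integral_setIntegral_ball hR hint]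
  simp_rw [hslice]
  rw [← intervalIntegral.integral_eq_integral_of_support_subset hvanish]
  refine intervalIntegral.integral_congr fun u hu => ?_
  rw [uIcc_of_le (by linarith), mem_Icc] at hu
  rw [sq_sqrt (by nlinarith)]

theorem setIntegral_ball_exp_neg_norm_sub_sq {s R d : ℝ} (hs : s ≠ 0) (hR : 0 ≤ R)
    {y c : EuclideanSpace ℝ (Fin 3)} (hyc : ‖y - c‖ = d) (hd : 0 < d) :
    ∫ x in ball c R, exp (-‖x - y‖ ^ 2 / s ^ 2) =
      π * s ^ 2 * (√π * s / 2 * (erf ((R + d) / s) + erf ((R - d) / s)) +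
        s ^ 2 / (2 * d) * (exp (-(R + d) ^ 2 / s ^ 2) - exp (-(R - d) ^ 2 / s ^ 2))) := by
  have hv : ‖consMeasurableEquiv 2 (d, 0)‖ = ‖y - c‖ := by
    rw [hyc, ← sq_eq_sq₀ (norm_nonneg _) hd.le, norm_consMeasurableEquiv_sq]
    simp
  have hsplit (u : ℝ) :
      exp (-(u - d) ^ 2 / s ^ 2) * (π * s ^ 2 * (1 - exp (-(R ^ 2 - u ^ 2) / s ^ 2))) =
        π * s ^ 2 *
          (exp (-(u - d) ^ 2 / s ^ 2) - exp (2 * d / s ^ 2 * u + -(R ^ 2 + d ^ 2) / s ^ 2)) := by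
    have : 2 * d / s ^ 2 * u + -(R ^ 2 + d ^ 2) / s ^ 2 =
        -(u - d) ^ 2 / s ^ 2 + -(R ^ 2 - u ^ 2) / s ^ 2 := by ring
    rw [this, exp_add]
    ring
  have hk : 2 * d / s ^ 2 ≠ 0 := by positivity
  have hcont₁ : Continuous fun u : ℝ => exp (-(u - d) ^ 2 / s ^ 2) := by fun_prop
  have hcont₂ : Continuous fun u : ℝ => exp (2 * d / s ^ 2 * u + -(R ^ 2 + d ^ 2) / s ^ 2) := by
    fun_prop
  have hright : 2 * d / s ^ 2 * R + -(R ^ 2 + d ^ 2) / s ^ 2 = -(R - d) ^ 2 / s ^ 2 := by ring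
  have hleft : 2 * d / s ^ 2 * -R + -(R ^ 2 + d ^ 2) / s ^ 2 = -(R + d) ^ 2 / s ^ 2 := by ring
  have herf : (-R - d) / s = -((R + d) / s) := by ring
  calc ∫ x in ball c R, exp (-‖x - y‖ ^ 2 / s ^ 2)
      = ∫ x in ball 0 R, exp (-‖x - consMeasurableEquiv 2 (d, 0)‖ ^ 2 / s ^ 2) :=
        setIntegral_ball_comp_norm_sub_of_norm_eq (fun r => exp (-r ^ 2 / s ^ 2)) hv R
    _ = π * s ^ 2 * ((∫ u in -R..R, exp (-(u - d) ^ 2 / s ^ 2)) -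
          ∫ u in -R..R, exp (2 * d / s ^ 2 * u + -(R ^ 2 + d ^ 2) / s ^ 2)) := by
        rw [setIntegral_ball_exp_neg_norm_sub_sq_eq_intervalIntegral hs hR,
          intervalIntegral.integral_congr fun u _ => hsplit u, intervalIntegral.integral_const_mul,
          intervalIntegral.integral_sub (hcont₁.intervalIntegrable _ _)
            (hcont₂.intervalIntegrable _ _)]
    _ = _ := by
        rw [integral_exp_neg_sub_sq_div_sq d hs, integral_exp_mul_add hk, hright, hleft, herf,
          erf_neg]
        field_simp
        ring

/-- Equation (B.1) of the paper: the probability that a molecule released at `y`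
and diffusing with coefficient `D` lies, at time `t`, inside the spherical
passive receiver of radius `R` centered at `c`, expressed via error functions. -/
theorem gaussian_ball_integral_erf (D t R : ℝ) (hD : 0 < D) (ht : 0 < t) (hR : 0 < R)
    (y c : EuclideanSpace ℝ (Fin 3)) (d : ℝ) (hdef : d = ‖y - c‖) (hd : 0 < d) :
    (4 * π * D * t) ^ (-(3 : ℝ) / 2) *
        ∫ x in Metric.ball c R, Real.exp (-‖x - y‖ ^ 2 / (4 * D * t))
      = (1 / 2) * (erf ((R + d) / (2 * Real.sqrt (D * t)))
                    + erf ((R - d) / (2 * Real.sqrt (D * t))))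
        + Real.sqrt (D * t) / (d * Real.sqrt π) *
            (Real.exp (-(R + d) ^ 2 / (4 * D * t))
              - Real.exp (-(R - d) ^ 2 / (4 * D * t))) := by
  set s := 2 * √(D * t) with hs_def
  have hs : 0 < s := by positivity
  have hsq : 4 * D * t = s ^ 2 := by
    rw [hs_def, mul_pow, sq_sqrt (by positivity)]
    ring
  have hnorm : (4 * π * D * t) ^ (-(3 : ℝ) / 2) = ((√π * s) ^ 3)⁻¹ := by
    have hsq' : 4 * π * D * t = (√π * s) ^ 2 := by
      rw [mul_pow, sq_sqrt pi_nonneg, ← hsq]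
      ring
    rw [hsq', ← rpow_natCast, ← rpow_mul (by positivity), ← rpow_natCast,
      ← rpow_neg (by positivity)]
    norm_num
  rw [hnorm, hsq, setIntegral_ball_exp_neg_norm_sub_sq hs.ne' hR.le hdef.symm hd,
    show √(D * t) = s / 2 by rw [hs_def]; ring]
  field_simp
  rw [sq_sqrt pi_nonneg]
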